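/- arXiv:1802.07510 — 5 statements merged into one kernel-verified Lean document; each statement's English description precedes it below -/
import Mathlib

section
/- Let L be the combinatorial Laplacian of a weighted graph G on N vertices, C ∈ ℝ^{n×N} a coarsening matrix, and L̃ = C L Cᵀ the coarsened Laplacian. Then for every k with 1 ≤ k ≤ n, the k-th smallest eigenvalue of L is at most the k-th smallest eigenvalue of L̃, i.e. λ_k ≤ λ̃_k. -/
/-!
Courant–Fischer in one step: the `n - 1` linear conditions "`y ⊥ x̃ⱼ` for `j > k`" and
"`Cᵀ y ⊥ xⱼ` for `j < k`" on `y ∈ ℝⁿ` have a nonzero solution. Since `C` has orthonormal rows,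
`v = Cᵀ y` satisfies `‖v‖ = ‖y‖` and `vᵀ L v = yᵀ L̃ y`, so expanding in the two eigenbases gives
`λ_k ‖y‖² ≤ vᵀ L v = yᵀ L̃ y ≤ λ̃_k ‖y‖²`.
-/

open Matrix

/-- The combinatorial Laplacian `L = D - W` of a weighted graph with weight matrix `W`,
where `D` is the diagonal matrix of weighted degrees `d_i = Σ_j W i j`. -/
def lap {N : ℕ} (W : Matrix (Fin N) (Fin N) ℝ) : Matrix (Fin N) (Fin N) ℝ :=
  Matrix.diagonal (fun i => ∑ j, W i j) - W

/-- `W` is the weight matrix of a weighted graph: symmetric, nonnegative, zero diagonal. -/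
def IsWeightedGraph {N : ℕ} (W : Matrix (Fin N) (Fin N) ℝ) : Prop :=
  (∀ i j, W i j = W j i) ∧ (∀ i j, 0 ≤ W i j) ∧ (∀ i, W i i = 0)

/-- A coarsening matrix `C : ℝ^{n×N}`. -/
def IsCoarsening {n N : ℕ} (C : Matrix (Fin n) (Fin N) ℝ) : Prop :=
  ∃ φ : Fin N → Fin n, Function.Surjective φ ∧
    ∀ i j, C i j =
      if φ j = i then
        (Real.sqrt ((Finset.univ.filter (fun j' : Fin N => φ j' = i)).card : ℝ))⁻¹
      else 0

section Eigenbasis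

variable {m : Type*} [Fintype m] [DecidableEq m] {x : m → m → ℝ}

theorem of_mul_transpose_eq_one_of_orthonormal
    (hx : ∀ i j, x i ⬝ᵥ x j = if i = j then 1 else 0) : of x * (of x)ᵀ = 1 := by
  ext i j
  simpa [mul_apply, one_apply, dotProduct] using hx i j

theorem sum_dotProduct_smul_eq_self_of_orthonormal
    (hx : ∀ i j, x i ⬝ᵥ x j = if i = j then 1 else 0) (v : m → ℝ) :
    ∑ j, (x j ⬝ᵥ v) • x j = v := by
  have hXX : (of x)ᵀ * of x = 1 := mul_eq_one_comm.mp (of_mul_transpose_eq_one_of_orthonormal hx)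
  calc ∑ j, (x j ⬝ᵥ v) • x j = (of x)ᵀ *ᵥ (of x *ᵥ v) := by
        ext p; simp [mulVec, dotProduct, Finset.sum_apply, mul_comm]
    _ = v := by rw [mulVec_mulVec, hXX, one_mulVec]

theorem dotProduct_self_eq_sum_of_orthonormal
    (hx : ∀ i j, x i ⬝ᵥ x j = if i = j then 1 else 0) (v : m → ℝ) :
    v ⬝ᵥ v = ∑ j, (x j ⬝ᵥ v) ^ 2 := by
  nth_rw 2 [← sum_dotProduct_smul_eq_self_of_orthonormal hx v]
  rw [dotProduct_sum]
  exact Finset.sum_congr rfl fun j _ => by rw [dotProduct_smul, smul_eq_mul, dotProduct_comm, sq]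

theorem dotProduct_mulVec_eq_sum_of_eigenbasis {A : Matrix m m ℝ} {lam : m → ℝ}
    (hx : ∀ i j, x i ⬝ᵥ x j = if i = j then 1 else 0) (hA : ∀ j, A *ᵥ x j = lam j • x j)
    (v : m → ℝ) :
    v ⬝ᵥ (A *ᵥ v) = ∑ j, lam j * (x j ⬝ᵥ v) ^ 2 := by
  nth_rw 2 [← sum_dotProduct_smul_eq_self_of_orthonormal hx v]
  rw [mulVec_sum, dotProduct_sum]
  refine Finset.sum_congr rfl fun j _ => ?_
  rw [mulVec_smul, hA, dotProduct_smul, dotProduct_smul, dotProduct_comm, smul_eq_mul, smul_eq_mul]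
  ring

theorem le_dotProduct_mulVec_of_eigenbasis {A : Matrix m m ℝ} {lam : m → ℝ}
    (hx : ∀ i j, x i ⬝ᵥ x j = if i = j then 1 else 0) (hA : ∀ j, A *ᵥ x j = lam j • x j)
    {μ : ℝ} {v : m → ℝ} (hv : ∀ j, lam j < μ → x j ⬝ᵥ v = 0) :
    μ * (v ⬝ᵥ v) ≤ v ⬝ᵥ (A *ᵥ v) := by
  rw [dotProduct_self_eq_sum_of_orthonormal hx, dotProduct_mulVec_eq_sum_of_eigenbasis hx hA,
    Finset.mul_sum]
  refine Finset.sum_le_sum fun j _ => ?_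
  by_cases hj : lam j < μ
  · simp [hv j hj]
  · exact mul_le_mul_of_nonneg_right (not_lt.mp hj) (sq_nonneg _)

theorem dotProduct_mulVec_le_of_eigenbasis {A : Matrix m m ℝ} {lam : m → ℝ}
    (hx : ∀ i j, x i ⬝ᵥ x j = if i = j then 1 else 0) (hA : ∀ j, A *ᵥ x j = lam j • x j)
    {μ : ℝ} {v : m → ℝ} (hv : ∀ j, μ < lam j → x j ⬝ᵥ v = 0) :
    v ⬝ᵥ (A *ᵥ v) ≤ μ * (v ⬝ᵥ v) := by
  rw [dotProduct_self_eq_sum_of_orthonormal hx, dotProduct_mulVec_eq_sum_of_eigenbasis hx hA,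
    Finset.mul_sum]
  refine Finset.sum_le_sum fun j _ => ?_
  by_cases hj : μ < lam j
  · simp [hv j hj]
  · exact mul_le_mul_of_nonneg_right (not_lt.mp hj) (sq_nonneg _)

end Eigenbasis

theorem exists_ne_zero_forall_dotProduct_eq_zero {K ι m : Type*} [Field K] [Fintype ι]
    [Fintype m] (f : ι → m → K) (h : Fintype.card ι < Fintype.card m) :
    ∃ y ≠ 0, ∀ i, f i ⬝ᵥ y = 0 := by
  have hker : LinearMap.ker (of f).mulVecLin ≠ ⊥ :=
    LinearMap.ker_ne_bot_of_finrank_lt (by simpa using h)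
  obtain ⟨y, hy, hy0⟩ := (Submodule.ne_bot_iff _).mp hker
  exact ⟨y, hy0, fun i => congrFun hy i⟩

theorem transpose_mulVec_dotProduct_mulVec {R m n : Type*} [CommSemiring R] [Fintype m]
    [Fintype n] (A : Matrix m m R) (C : Matrix n m R) (y : n → R) :
    (Cᵀ *ᵥ y) ⬝ᵥ (A *ᵥ (Cᵀ *ᵥ y)) = y ⬝ᵥ ((C * A * Cᵀ) *ᵥ y) := by
  rw [mulVec_mulVec, mulVec_transpose, dotProduct_mulVec, vecMul_vecMul, dotProduct_mulVec,
    ← Matrix.mul_assoc]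

theorem IsCoarsening.mul_transpose_eq_one {n N : ℕ} {C : Matrix (Fin n) (Fin N) ℝ}
    (hC : IsCoarsening C) : C * Cᵀ = 1 := by
  obtain ⟨φ, hφ, hC⟩ := hC
  ext i i'
  simp only [mul_apply, transpose_apply, hC, one_apply, mul_ite, ite_mul, zero_mul, mul_zero]
  split_ifs with hii
  · subst hii
    have hcard : (0 : ℝ) < (Finset.univ.filter (fun j => φ j = i)).card := by
      obtain ⟨j, hj⟩ := hφ i
      exact_mod_cast Finset.card_pos.mpr ⟨j, by simp [hj]⟩
    simp only [← ite_and, and_self]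
    rw [← Finset.sum_filter, Finset.sum_const, nsmul_eq_mul, ← mul_inv,
      Real.mul_self_sqrt hcard.le, mul_inv_cancel₀ hcard.ne']
  · refine Finset.sum_eq_zero fun j _ => ?_
    split_ifs with hi' hi
    · exact absurd (hi.symm.trans hi') hii
    all_goals rfl

theorem coarsening_eigenvalue_interlacing_general {n N : ℕ} (hn : n ≤ N)
    (W : Matrix (Fin N) (Fin N) ℝ)
    (C : Matrix (Fin n) (Fin N) ℝ) (hC : IsCoarsening C)
    (lam : Fin N → ℝ) (x : Fin N → Fin N → ℝ)
    (hmono : Monotone lam)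
    (hortho : ∀ i j, x i ⬝ᵥ x j = if i = j then (1 : ℝ) else 0)
    (heig : ∀ i, lap W *ᵥ x i = lam i • x i)
    (lamt : Fin n → ℝ) (xt : Fin n → Fin n → ℝ)
    (hmonot : Monotone lamt)
    (horthot : ∀ i j, xt i ⬝ᵥ xt j = if i = j then (1 : ℝ) else 0)
    (heigt : ∀ i, (C * lap W * Cᵀ) *ᵥ xt i = lamt i • xt i) :
    ∀ k : Fin n, lam (Fin.castLE hn k) ≤ lamt k := by
  intro k
  obtain ⟨y, hy0, hy⟩ := exists_ne_zero_forall_dotProduct_eq_zero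
    (Sum.elim (fun j : {j : Fin n // k < j} => xt j)
      (fun j : Fin k => x (Fin.castLE (k.is_le'.trans hn) j) ᵥ* Cᵀ))
    (by simp only [Fintype.card_sum, Fintype.card_subtype, Finset.filter_lt_eq_Ioi, Fin.card_Ioi,
      Fintype.card_fin]; omega)
  have hxt : ∀ j, lamt k < lamt j → xt j ⬝ᵥ y = 0 :=
    fun j hj => hy (.inl ⟨j, hmonot.reflect_lt hj⟩)
  have hx : ∀ j, lam j < lam (Fin.castLE hn k) → x j ⬝ᵥ (Cᵀ *ᵥ y) = 0 := fun j hj => by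
    rw [dotProduct_mulVec]
    exact hy (.inr ⟨j, hmono.reflect_lt hj⟩)
  have hpos : 0 < y ⬝ᵥ y :=
    (Finset.sum_nonneg fun i _ => mul_self_nonneg (y i)).lt_of_ne'
      (dotProduct_self_eq_zero.not.mpr hy0)
  have hnorm : (Cᵀ *ᵥ y) ⬝ᵥ (Cᵀ *ᵥ y) = y ⬝ᵥ y := by
    simpa [hC.mul_transpose_eq_one] using transpose_mulVec_dotProduct_mulVec 1 C y
  refine le_of_mul_le_mul_right ?_ hpos
  calc lam (Fin.castLE hn k) * (y ⬝ᵥ y)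
      = lam (Fin.castLE hn k) * ((Cᵀ *ᵥ y) ⬝ᵥ (Cᵀ *ᵥ y)) := by rw [hnorm]
    _ ≤ (Cᵀ *ᵥ y) ⬝ᵥ (lap W *ᵥ (Cᵀ *ᵥ y)) := le_dotProduct_mulVec_of_eigenbasis hortho heig hx
    _ = y ⬝ᵥ ((C * lap W * Cᵀ) *ᵥ y) := transpose_mulVec_dotProduct_mulVec _ C y
    _ ≤ lamt k * (y ⬝ᵥ y) := dotProduct_mulVec_le_of_eigenbasis horthot heigt hxt

/-- eigenvalue interlacing `λ_k ≤ λ̃_k` for the coarsened Laplacian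
`L̃ = C L Cᵀ`.  The eigenvalues of `L` (resp. `L̃`) are described by a monotone family
`lam` (resp. `lamt`) together with an orthonormal basis of eigenvectors. -/
theorem coarsening_eigenvalue_interlacing {n N : ℕ} (hn : n ≤ N)
    (W : Matrix (Fin N) (Fin N) ℝ) (hW : IsWeightedGraph W)
    (C : Matrix (Fin n) (Fin N) ℝ) (hC : IsCoarsening C)
    (lam : Fin N → ℝ) (x : Fin N → Fin N → ℝ)
    (hmono : Monotone lam)
    (hortho : ∀ i j, x i ⬝ᵥ x j = if i = j then (1 : ℝ) else 0)
    (heig : ∀ i, lap W *ᵥ x i = lam i • x i)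
    (lamt : Fin n → ℝ) (xt : Fin n → Fin n → ℝ)
    (hmonot : Monotone lamt)
    (horthot : ∀ i j, xt i ⬝ᵥ xt j = if i = j then (1 : ℝ) else 0)
    (heigt : ∀ i, (C * lap W * Cᵀ) *ᵥ xt i = lamt i • xt i) :
    ∀ k : Fin n, lam (Fin.castLE hn k) ≤ lamt k :=
  coarsening_eigenvalue_interlacing_general hn W C hC lam x hmono hortho heig lamt xt hmonot horthot
    heigt
end

section
/- Let L be the combinatorial Laplacian of a weighted graph G on N vertices, C ∈ ℝ^{n×N} a coarsening matrix with Π = Cᵀ C, and L̃ = C L Cᵀ. Fix k with 2 ≤ k ≤ n and a constant ε_k ≥ 0 such that x_kᵀ Π L Π x_k ≤ (1 + ε_k) λ_k, and suppose s_k := Σ_{i=k}^{n} (x̃_iᵀ C x_k)² > 0. Then λ_k ≤ λ̃_k ≤ max{ λ̃_{k−1}, (1 + ε_k) λ_k / s_k }. -/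
open Matrix

lemma coarsening_CCt {n N : ℕ} (C : Matrix (Fin n) (Fin N) ℝ) (hC : IsCoarsening C) :
    C * Cᵀ = 1 := by
  obtain ⟨φ, hsurj, hval⟩ := hC
  ext i i'
  simp only [Matrix.mul_apply, Matrix.transpose_apply, Matrix.one_apply, hval]
  by_cases h : i = i'
  · subst h
    simp only [if_pos rfl, if_true]
    rw [← Finset.sum_filter_of_ne (p := fun j => φ j = i)
      (by intro j _ hne; by_contra hc; simp [if_neg hc] at hne)]
    have hcardpos : 0 < (Finset.univ.filter (fun j' : Fin N => φ j' = i)).card := by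
      obtain ⟨j, hj⟩ := hsurj i
      exact Finset.card_pos.mpr ⟨j, by simp [hj]⟩
    set c : ℝ := ((Finset.univ.filter (fun j' : Fin N => φ j' = i)).card : ℝ) with hc
    have hcpos : 0 < c := Nat.cast_pos.mpr hcardpos
    have : ∀ j ∈ Finset.univ.filter (fun j' : Fin N => φ j' = i),
        (if φ j = i then (Real.sqrt c)⁻¹ else 0) * (if φ j = i then (Real.sqrt c)⁻¹ else 0)
        = c⁻¹ := by
      intro j hj
      rw [Finset.mem_filter] at hj
      rw [if_pos hj.2, ← mul_inv, Real.mul_self_sqrt hcpos.le]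
    rw [Finset.sum_congr rfl this, Finset.sum_const, nsmul_eq_mul, ← hc,
      mul_inv_cancel₀ hcpos.ne']
  · rw [if_neg h]
    apply Finset.sum_eq_zero
    intro j _
    by_cases h1 : φ j = i
    · rw [if_neg (fun hh : φ j = i' => h (h1.symm.trans hh)), mul_zero]
    · rw [if_neg h1, zero_mul]

lemma mulVec_dot {m n : ℕ} (M : Matrix (Fin m) (Fin n) ℝ) (a : Fin n → ℝ) (b : Fin m → ℝ) :
    (M *ᵥ a) ⬝ᵥ b = a ⬝ᵥ (Mᵀ *ᵥ b) := by
  rw [dotProduct_comm, Matrix.dotProduct_mulVec, ← Matrix.mulVec_transpose,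
    dotProduct_comm]

lemma transfer {n N : ℕ} (C : Matrix (Fin n) (Fin N) ℝ) (A : Matrix (Fin N) (Fin N) ℝ)
    (u : Fin n → ℝ) :
    (Cᵀ *ᵥ u) ⬝ᵥ (A *ᵥ (Cᵀ *ᵥ u)) = u ⬝ᵥ ((C * A * Cᵀ) *ᵥ u) := by
  rw [Matrix.mulVec_mulVec, mulVec_dot, Matrix.transpose_transpose, Matrix.mulVec_mulVec,
    ← Matrix.mul_assoc]

lemma lap_psd {N : ℕ} (W : Matrix (Fin N) (Fin N) ℝ) (hW : IsWeightedGraph W)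
    (v : Fin N → ℝ) : 0 ≤ v ⬝ᵥ (lap W *ᵥ v) := by
  obtain ⟨hsym, hnn, _⟩ := hW
  set S1 := ∑ i, ∑ j, W i j * v i ^ 2 with hS1
  set S2 := ∑ i, ∑ j, W i j * (v i * v j) with hS2
  set S3 := ∑ i, ∑ j, W i j * v j ^ 2 with hS3
  have hswap : S3 = S1 := by
    rw [hS3, hS1, Finset.sum_comm]
    exact Finset.sum_congr rfl fun i _ => Finset.sum_congr rfl fun j _ => by rw [hsym]
  have lhs_eq : v ⬝ᵥ (lap W *ᵥ v) = S1 - S2 := by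
    have per_i : ∀ i, v i * (lap W *ᵥ v) i
        = (∑ j, W i j * v i ^ 2) - ∑ j, W i j * (v i * v j) := by
      intro i
      have h0 : (lap W *ᵥ v) i = (∑ l, W i l) * v i - ∑ j, W i j * v j := by
        simp only [lap, Matrix.sub_mulVec, Pi.sub_apply, Matrix.mulVec_diagonal]
        simp only [Matrix.mulVec, dotProduct]
      have e1 : v i * ((∑ l, W i l) * v i) = ∑ l, W i l * v i ^ 2 := by
        rw [mul_comm, mul_assoc, Finset.sum_mul]
        exact Finset.sum_congr rfl fun l _ => by ring
      have e2 : v i * (∑ j, W i j * v j) = ∑ j, W i j * (v i * v j) := by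
        rw [Finset.mul_sum]
        exact Finset.sum_congr rfl fun j _ => by ring
      rw [h0, mul_sub, e1, e2]
    have : v ⬝ᵥ (lap W *ᵥ v)
        = ∑ i, ((∑ j, W i j * v i ^ 2) - ∑ j, W i j * (v i * v j)) := by
      rw [dotProduct]
      exact Finset.sum_congr rfl fun i _ => per_i i
    rw [this, Finset.sum_sub_distrib]
  have sq_eq : ∑ i, ∑ j, W i j * (v i - v j) ^ 2 = S1 + S3 - 2 * S2 := by
    have : ∀ i : Fin N, ∑ j, W i j * (v i - v j) ^ 2
        = ((∑ j, W i j * v i ^ 2) + ∑ j, W i j * v j ^ 2) - 2 * ∑ j, W i j * (v i * v j) := by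
      intro i
      rw [Finset.mul_sum, ← Finset.sum_add_distrib, ← Finset.sum_sub_distrib]
      exact Finset.sum_congr rfl fun j _ => by ring
    rw [Finset.sum_congr rfl fun i _ => this i, Finset.sum_sub_distrib, Finset.sum_add_distrib,
      hS1, hS3, hS2, Finset.mul_sum]
  have hnonneg : 0 ≤ ∑ i : Fin N, ∑ j, W i j * (v i - v j) ^ 2 :=
    Finset.sum_nonneg fun i _ => Finset.sum_nonneg fun j _ => mul_nonneg (hnn i j) (sq_nonneg _)
  rw [lhs_eq]
  rw [sq_eq, hswap] at hnonneg
  linarith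

section helpers
variable {m : ℕ}

/-- dot product of two combinations of orthonormal vectors -/
lemma dot_combo (x : Fin m → Fin m → ℝ)
    (hortho : ∀ i j, x i ⬝ᵥ x j = if i = j then (1 : ℝ) else 0)
    (c d : Fin m → ℝ) :
    (∑ i, c i • x i) ⬝ᵥ (∑ i, d i • x i) = ∑ i, c i * d i := by
  simp only [dotProduct, Finset.sum_apply, Pi.smul_apply, smul_eq_mul]
  have : ∀ j, (∑ i, c i * x i j) * (∑ i', d i' * x i' j)
      = ∑ i, ∑ i', (c i * d i') * (x i j * x i' j) := by
    intro j
    rw [Finset.sum_mul_sum]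
    exact Finset.sum_congr rfl fun i _ => Finset.sum_congr rfl fun i' _ => by ring
  simp only [this]
  rw [Finset.sum_comm]
  have : ∀ i : Fin m, ∑ j, ∑ i', (c i * d i') * (x i j * x i' j)
      = ∑ i', (c i * d i') * (x i ⬝ᵥ x i') := by
    intro i
    rw [Finset.sum_comm]
    exact Finset.sum_congr rfl fun i' _ => by
      rw [dotProduct, Finset.mul_sum]
  simp only [this, hortho]
  simp [Finset.sum_ite_eq]

lemma mulVec_combo (A : Matrix (Fin m) (Fin m) ℝ) (x : Fin m → Fin m → ℝ)
    (lam : Fin m → ℝ) (heig : ∀ i, A *ᵥ x i = lam i • x i) (c : Fin m → ℝ) :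
    A *ᵥ (∑ i, c i • x i) = ∑ i, (c i * lam i) • x i := by
  have := map_sum (Matrix.mulVecLin A) (fun i => c i • x i) Finset.univ
  simp only [Matrix.mulVecLin_apply] at this
  rw [this]
  refine Finset.sum_congr rfl fun i _ => ?_
  rw [Matrix.mulVec_smul, heig i, smul_smul]

lemma combo_quadform (A : Matrix (Fin m) (Fin m) ℝ) (x : Fin m → Fin m → ℝ)
    (lam : Fin m → ℝ)
    (hortho : ∀ i j, x i ⬝ᵥ x j = if i = j then (1 : ℝ) else 0)
    (heig : ∀ i, A *ᵥ x i = lam i • x i) (c : Fin m → ℝ) :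
    (∑ i, c i • x i) ⬝ᵥ (A *ᵥ (∑ i, c i • x i)) = ∑ i, c i ^ 2 * lam i := by
  rw [mulVec_combo A x lam heig c, dot_combo x hortho]
  exact Finset.sum_congr rfl fun i _ => by ring

/-- expansion in an orthonormal basis -/
lemma combo_expand (x : Fin m → Fin m → ℝ)
    (hortho : ∀ i j, x i ⬝ᵥ x j = if i = j then (1 : ℝ) else 0)
    (v : Fin m → ℝ) : v = ∑ i, (x i ⬝ᵥ v) • x i := by
  set X : Matrix (Fin m) (Fin m) ℝ := Matrix.of x with hX
  have h1 : X * Xᵀ = 1 := by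
    ext i j
    simpa [hX, Matrix.mul_apply, Matrix.one_apply, dotProduct] using hortho i j
  have h2 : Xᵀ * X = 1 := mul_eq_one_comm.mp h1
  have h3 : Xᵀ *ᵥ (X *ᵥ v) = v := by
    rw [Matrix.mulVec_mulVec, h2, Matrix.one_mulVec]
  conv_lhs => rw [← h3]
  ext j
  simp only [Matrix.mulVec, dotProduct, Finset.sum_apply, Pi.smul_apply, smul_eq_mul,
    Matrix.transpose_apply, hX, Matrix.of_apply]
  exact Finset.sum_congr rfl fun i _ => by ring

end helpers

lemma dot_sum_right {m p : ℕ} (a : Fin p → ℝ) (c : Fin m → ℝ) (w : Fin m → Fin p → ℝ) :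
    a ⬝ᵥ (∑ l, c l • w l) = ∑ l, c l * (a ⬝ᵥ w l) := by
  simp only [dotProduct, Finset.sum_apply, Pi.smul_apply, smul_eq_mul, Finset.mul_sum]
  rw [Finset.sum_comm]
  refine Finset.sum_congr rfl fun l _ => Finset.sum_congr rfl fun j _ => by ring

lemma sum_c {K n : ℕ} (h : K + 1 ≤ n) (β : Fin (K + 1) → ℝ) (f : Fin n → ℝ) :
    ∑ i : Fin n, (if h' : (i : ℕ) < K + 1 then β ⟨i.1, h'⟩ else 0) * f i
      = ∑ j : Fin (K + 1), β j * f (Fin.castLE h j) := by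
  have hmap : ∑ j : Fin (K + 1), β j * f (Fin.castLE h j)
      = ∑ i ∈ Finset.univ.map ⟨Fin.castLE h, Fin.castLE_injective h⟩,
          (if h' : (i : ℕ) < K + 1 then β ⟨i.1, h'⟩ else 0) * f i := by
    rw [Finset.sum_map]
    refine Finset.sum_congr rfl fun j _ => ?_
    simp only [Function.Embedding.coeFn_mk]
    rw [dif_pos (show ((Fin.castLE h j : Fin n) : ℕ) < K + 1 from j.isLt)]
    congr 1
  rw [hmap]
  refine (Finset.sum_subset (Finset.subset_univ _) fun i _ hni => ?_).symm
  rw [dif_neg, zero_mul]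
  intro h'
  exact hni (Finset.mem_map.mpr ⟨⟨i.1, h'⟩, Finset.mem_univ _, by ext; rfl⟩)

/-- with `Π = CᵀC` and `L̃ = C L Cᵀ`, if the `k`-th RSS-type inequality
`x_kᵀ Π L Π x_k ≤ (1+ε_k) λ_k` holds and `s_k = Σ_{i≥k} (x̃_iᵀ C x_k)² > 0`, then
`λ_k ≤ λ̃_k ≤ max{λ̃_{k-1}, (1+ε_k) λ_k / s_k}`.
Indices are 0-based: `k : Fin n` with `1 ≤ k` corresponds to the 1-based `2 ≤ k ≤ n`. -/
theorem coarsened_eigenvalue_upper_bound {n N : ℕ} (hn : n ≤ N)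
    (W : Matrix (Fin N) (Fin N) ℝ) (hW : IsWeightedGraph W)
    (C : Matrix (Fin n) (Fin N) ℝ) (hC : IsCoarsening C)
    (lam : Fin N → ℝ) (x : Fin N → Fin N → ℝ)
    (hmono : Monotone lam)
    (hortho : ∀ i j, x i ⬝ᵥ x j = if i = j then (1 : ℝ) else 0)
    (heig : ∀ i, lap W *ᵥ x i = lam i • x i)
    (lamt : Fin n → ℝ) (xt : Fin n → Fin n → ℝ)
    (hmonot : Monotone lamt)
    (horthot : ∀ i j, xt i ⬝ᵥ xt j = if i = j then (1 : ℝ) else 0)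
    (heigt : ∀ i, (C * lap W * Cᵀ) *ᵥ xt i = lamt i • xt i)
    (k : Fin n) (hk : 1 ≤ (k : ℕ))
    (eps : ℝ) (heps : 0 ≤ eps)
    (hrss : ((Cᵀ * C) *ᵥ x (Fin.castLE hn k)) ⬝ᵥ (lap W *ᵥ ((Cᵀ * C) *ᵥ x (Fin.castLE hn k)))
      ≤ (1 + eps) * lam (Fin.castLE hn k))
    (hs : 0 < ∑ i ∈ Finset.univ.filter (fun i : Fin n => k ≤ i),
      (xt i ⬝ᵥ (C *ᵥ x (Fin.castLE hn k))) ^ 2) :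
    lam (Fin.castLE hn k) ≤ lamt k ∧
    lamt k ≤ max (lamt ⟨(k : ℕ) - 1, lt_of_le_of_lt (Nat.sub_le _ _) k.isLt⟩)
      ((1 + eps) * lam (Fin.castLE hn k) /
        ∑ i ∈ Finset.univ.filter (fun i : Fin n => k ≤ i),
          (xt i ⬝ᵥ (C *ᵥ x (Fin.castLE hn k))) ^ 2) := by
  have hCCt : C * Cᵀ = 1 := coarsening_CCt C hC
  -- nonnegativity of coarse eigenvalues
  have hlamt_nonneg : ∀ i, 0 ≤ lamt i := by
    intro i
    have h1 := transfer C (lap W) (xt i)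
    have h2 : xt i ⬝ᵥ ((C * lap W * Cᵀ) *ᵥ xt i) = lamt i := by
      rw [heigt i, dotProduct_smul, horthot i i, if_pos rfl]
      simp
    have h3 := lap_psd W hW (Cᵀ *ᵥ xt i)
    rw [h1, h2] at h3
    exact h3
  constructor
  · -- PART 1 : interlacing  λ_k ≤ λ̃_k
    have hkn : (k : ℕ) < n := k.isLt
    have hKn : (k : ℕ) + 1 ≤ n := hkn
    have hKN : (k : ℕ) < N := lt_of_lt_of_le hkn hn
    set K := (k : ℕ) with hK
    -- constraint matrix
    set M : Matrix (Fin (K + 1)) (Fin (K + 1)) ℝ := fun i j =>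
      if h : (i : ℕ) < K then x ⟨i.1, lt_trans h hKN⟩ ⬝ᵥ (Cᵀ *ᵥ xt (Fin.castLE hKn j)) else 0
      with hM
    have hdet : M.det = 0 :=
      Matrix.det_eq_zero_of_row_eq_zero ⟨K, Nat.lt_succ_self K⟩
        (fun j => dif_neg (lt_irrefl K))
    obtain ⟨β, hβ0, hMβ⟩ := (Matrix.exists_mulVec_eq_zero_iff).mpr hdet
    set c : Fin n → ℝ := fun i => if h : (i : ℕ) < K + 1 then β ⟨i.1, h⟩ else 0 with hc
    set u : Fin n → ℝ := ∑ i, c i • xt i with hu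
    set v : Fin N → ℝ := Cᵀ *ᵥ u with hv
    -- norms agree and are positive
    have huu : u ⬝ᵥ u = ∑ i, c i * c i := dot_combo xt horthot c c
    have hvvu : v ⬝ᵥ v = u ⬝ᵥ u := by
      have := transfer C 1 u
      rw [Matrix.one_mulVec, Matrix.mul_one, hCCt, Matrix.one_mulVec] at this
      exact this
    have hpos : 0 < u ⬝ᵥ u := by
      obtain ⟨j₀, hj₀⟩ := Function.ne_iff.mp hβ0
      rw [huu]
      have hkey : c (Fin.castLE hKn j₀) = β j₀ := by
        rw [hc]
        simp only
        rw [dif_pos (show ((Fin.castLE hKn j₀ : Fin n) : ℕ) < K + 1 from j₀.isLt)]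
        congr 1
      have h1 : 0 < c (Fin.castLE hKn j₀) * c (Fin.castLE hKn j₀) := by
        rw [hkey]; exact mul_self_pos.mpr hj₀
      refine lt_of_lt_of_le h1 ?_
      exact Finset.single_le_sum (fun i _ => mul_self_nonneg (c i)) (Finset.mem_univ _)
    -- the quadratic form of v
    have hquad_u : u ⬝ᵥ ((C * lap W * Cᵀ) *ᵥ u) = ∑ i, c i ^ 2 * lamt i :=
      combo_quadform _ xt lamt horthot heigt c
    have hvLv : v ⬝ᵥ (lap W *ᵥ v) = ∑ i, c i ^ 2 * lamt i := by
      rw [hv, transfer, hquad_u]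
    have hupper : v ⬝ᵥ (lap W *ᵥ v) ≤ lamt k * (v ⬝ᵥ v) := by
      rw [hvLv, hvvu, huu, Finset.mul_sum]
      refine Finset.sum_le_sum fun i _ => ?_
      by_cases h' : (i : ℕ) < K + 1
      · have hik : i ≤ k := by
          rw [Fin.le_def]; omega
        have := hmonot hik
        calc c i ^ 2 * lamt i ≤ c i ^ 2 * lamt k :=
              mul_le_mul_of_nonneg_left this (sq_nonneg _)
          _ = lamt k * (c i * c i) := by ring
      · rw [hc]; simp only [dif_neg h']; simp
    -- expansion of v in the fine eigenbasis
    set γ : Fin N → ℝ := fun i => x i ⬝ᵥ v with hγ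
    have hvexp : v = ∑ i, γ i • x i := combo_expand x hortho v
    have hquad_v : v ⬝ᵥ (lap W *ᵥ v) = ∑ i, γ i ^ 2 * lam i := by
      have := combo_quadform (lap W) x lam hortho heig γ
      rw [← hvexp] at this
      exact this
    have hvv2 : v ⬝ᵥ v = ∑ i, γ i * γ i := by
      have := dot_combo x hortho γ γ
      rw [← hvexp] at this
      exact this
    -- the first K coefficients vanish
    have hγ0 : ∀ i : Fin N, (i : ℕ) < K → γ i = 0 := by
      intro i hiK
      have hCu : Cᵀ *ᵥ u = ∑ l, c l • (Cᵀ *ᵥ xt l) := by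
        rw [hu]
        have := map_sum (Matrix.mulVecLin Cᵀ) (fun l => c l • xt l) Finset.univ
        simp only [Matrix.mulVecLin_apply] at this
        rw [this]
        exact Finset.sum_congr rfl fun l _ => Matrix.mulVec_smul _ _ _
      have h1 : γ i = ∑ l, c l * (x i ⬝ᵥ (Cᵀ *ᵥ xt l)) := by
        rw [hγ]; simp only; rw [hv, hCu, dot_sum_right]
      have h2 : γ i = ∑ j : Fin (K + 1), β j * (x i ⬝ᵥ (Cᵀ *ᵥ xt (Fin.castLE hKn j))) := by
        rw [h1, hc]
        exact sum_c hKn β _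
      have hlt : i.1 < K + 1 := lt_trans hiK (Nat.lt_succ_self K)
      have h3 : ∑ j : Fin (K + 1), M ⟨i.1, hlt⟩ j * β j = 0 := congrFun hMβ ⟨i.1, hlt⟩
      have hMe : ∀ j, M ⟨i.1, hlt⟩ j = x i ⬝ᵥ (Cᵀ *ᵥ xt (Fin.castLE hKn j)) := by
        intro j
        rw [hM]
        simp only
        rw [dif_pos (show ((⟨i.1, hlt⟩ : Fin (K + 1)) : ℕ) < K from hiK)]
      simp only [hMe] at h3
      rw [h2, ← h3]
      exact Finset.sum_congr rfl fun j _ => mul_comm _ _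
    -- lower bound via monotonicity
    have hlower : lam (Fin.castLE hn k) * (v ⬝ᵥ v) ≤ v ⬝ᵥ (lap W *ᵥ v) := by
      rw [hquad_v, hvv2, Finset.mul_sum]
      refine Finset.sum_le_sum fun i _ => ?_
      by_cases h' : (i : ℕ) < K
      · rw [hγ0 i h']; simp
      · have hik : Fin.castLE hn k ≤ i := by
          rw [Fin.le_def]; simpa using Nat.le_of_not_lt h'
        calc lam (Fin.castLE hn k) * (γ i * γ i)
            = γ i ^ 2 * lam (Fin.castLE hn k) := by ring
          _ ≤ γ i ^ 2 * lam i := mul_le_mul_of_nonneg_left (hmono hik) (sq_nonneg _)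
    have hvvpos : 0 < v ⬝ᵥ v := by rw [hvvu]; exact hpos
    exact le_of_mul_le_mul_right (le_trans hlower hupper) hvvpos
  · -- PART 2 : upper bound
    set y : Fin n → ℝ := C *ᵥ x (Fin.castLE hn k) with hy
    set α : Fin n → ℝ := fun i => xt i ⬝ᵥ y with hα
    have hyexp : y = ∑ i, α i • xt i := combo_expand xt horthot y
    have hquad : y ⬝ᵥ ((C * lap W * Cᵀ) *ᵥ y) = ∑ i, α i ^ 2 * lamt i := by
      have := combo_quadform (C * lap W * Cᵀ) xt lamt horthot heigt α
      rw [← hyexp] at this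
      exact this
    have hbound : ∑ i, α i ^ 2 * lamt i ≤ (1 + eps) * lam (Fin.castLE hn k) := by
      rw [← hquad, hy]
      rw [← Matrix.mulVec_mulVec] at hrss
      rw [transfer] at hrss
      exact hrss
    set s := Finset.univ.filter (fun i : Fin n => k ≤ i) with hsdef
    have hsplit : ∑ i ∈ s, α i ^ 2 * lamt i ≤ ∑ i, α i ^ 2 * lamt i := by
      refine Finset.sum_le_sum_of_subset_of_nonneg (Finset.subset_univ _) fun i _ _ =>
        mul_nonneg (sq_nonneg _) (hlamt_nonneg i)
    have hterm : lamt k * ∑ i ∈ s, α i ^ 2 ≤ ∑ i ∈ s, α i ^ 2 * lamt i := by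
      rw [Finset.mul_sum]
      refine Finset.sum_le_sum fun i hi => ?_
      rw [hsdef, Finset.mem_filter] at hi
      calc lamt k * α i ^ 2 = α i ^ 2 * lamt k := by ring
        _ ≤ α i ^ 2 * lamt i := mul_le_mul_of_nonneg_left (hmonot hi.2) (sq_nonneg _)
    have hfinal : lamt k * ∑ i ∈ s, α i ^ 2 ≤ (1 + eps) * lam (Fin.castLE hn k) :=
      le_trans hterm (le_trans hsplit hbound)
    refine le_trans ?_ (le_max_right _ _)
    rw [le_div_iff₀ hs]
    exact hfinal
end

section
/- Let L be the combinatorial Laplacian of a weighted graph G on N vertices, C ∈ ℝ^{n×N} a coarsening matrix with Π = Cᵀ C, and L̃ = C L Cᵀ. Suppose λ_1 = 0, Π x_1 = x_1, and C x_1 = x̃_1. If ε_2 ≥ 0 satisfies x_2ᵀ Π L Π x_2 ≤ (1 + ε_2) λ_2 and ‖Π x_2‖₂ > 0, then λ_2 ≤ λ̃_2 ≤ (1 + ε_2) λ_2 / ‖Π x_2‖₂². -/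
open Matrix

lemma expand_ortho {m : ℕ} (x : Fin m → Fin m → ℝ)
    (hortho : ∀ i j, x i ⬝ᵥ x j = if i = j then (1 : ℝ) else 0)
    (z : Fin m → ℝ) (j : Fin m) : ∑ i, (z ⬝ᵥ x i) * x i j = z j := by
  set X : Matrix (Fin m) (Fin m) ℝ := Matrix.of x with hX
  have hXXt : X * Xᵀ = 1 := by
    ext i j
    simpa [hX, Matrix.of_apply, Matrix.mul_apply, Matrix.one_apply, dotProduct] using hortho i j
  have hXtX : Xᵀ * X = 1 := mul_eq_one_comm.mp hXXt
  have h1 : ∑ i, (z ⬝ᵥ x i) * x i j = ∑ k, z k * (Xᵀ * X) k j := by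
    simp only [dotProduct, Finset.sum_mul, Matrix.mul_apply,
      Matrix.transpose_apply, Finset.mul_sum, hX, Matrix.of_apply]
    rw [Finset.sum_comm]
    apply Finset.sum_congr rfl; intro k _
    apply Finset.sum_congr rfl; intro i _
    ring
  rw [h1, hXtX]
  simp [Matrix.one_apply]

lemma rayleigh_second {m : ℕ} (hm : 2 ≤ m) (A : Matrix (Fin m) (Fin m) ℝ)
    (lam : Fin m → ℝ) (x : Fin m → Fin m → ℝ)
    (hmono : Monotone lam)
    (hortho : ∀ i j, x i ⬝ᵥ x j = if i = j then (1 : ℝ) else 0)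
    (heig : ∀ i, A *ᵥ x i = lam i • x i)
    (z : Fin m → ℝ) (hz : z ⬝ᵥ x ⟨0, by omega⟩ = 0) :
    lam ⟨1, by omega⟩ * (z ⬝ᵥ z) ≤ z ⬝ᵥ (A *ᵥ z) := by
  set c : Fin m → ℝ := fun i => z ⬝ᵥ x i with hc
  have hci : ∀ i, (∑ j, z j * x i j) = c i := by
    intro i; simp [hc, dotProduct]
  have hzz : z ⬝ᵥ z = ∑ i, c i * c i := by
    calc z ⬝ᵥ z = ∑ j, (∑ i, c i * x i j) * z j := by
          simp only [dotProduct]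
          exact Finset.sum_congr rfl fun j _ => by rw [expand_ortho x hortho z j]
      _ = ∑ j, ∑ i, c i * (z j * x i j) := by
          apply Finset.sum_congr rfl; intro j _
          rw [Finset.sum_mul]
          exact Finset.sum_congr rfl fun i _ => by ring
      _ = ∑ i, ∑ j, c i * (z j * x i j) := Finset.sum_comm
      _ = ∑ i, c i * c i := by
          apply Finset.sum_congr rfl; intro i _
          rw [← Finset.mul_sum, hci]
  have hAzj : ∀ j, (A *ᵥ z) j = ∑ i, c i * (lam i * x i j) := by
    intro j
    have h2 : (A *ᵥ z) j = ∑ k, A j k * ∑ i, c i * x i k := by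
      simp only [Matrix.mulVec, dotProduct]
      exact Finset.sum_congr rfl fun k _ => by rw [expand_ortho x hortho z k]
    rw [h2]
    simp only [Finset.mul_sum]
    rw [Finset.sum_comm]
    apply Finset.sum_congr rfl; intro i _
    have hAx : ∑ k, A j k * x i k = lam i * x i j := by
      have := congrFun (heig i) j
      simpa [Matrix.mulVec, dotProduct, Pi.smul_apply] using this
    calc ∑ k, A j k * (c i * x i k) = c i * ∑ k, A j k * x i k := by
          rw [Finset.mul_sum]; exact Finset.sum_congr rfl fun k _ => by ring
      _ = c i * (lam i * x i j) := by rw [hAx]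
  have hAz : z ⬝ᵥ (A *ᵥ z) = ∑ i, lam i * (c i * c i) := by
    calc z ⬝ᵥ (A *ᵥ z) = ∑ j, z j * ∑ i, c i * (lam i * x i j) := by
          simp only [dotProduct]
          exact Finset.sum_congr rfl fun j _ => by rw [hAzj j]
      _ = ∑ j, ∑ i, (c i * lam i) * (z j * x i j) := by
          apply Finset.sum_congr rfl; intro j _
          rw [Finset.mul_sum]
          exact Finset.sum_congr rfl fun i _ => by ring
      _ = ∑ i, ∑ j, (c i * lam i) * (z j * x i j) := Finset.sum_comm
      _ = ∑ i, lam i * (c i * c i) := by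
          apply Finset.sum_congr rfl; intro i _
          rw [← Finset.mul_sum, hci]
          ring
  rw [hzz, hAz, Finset.mul_sum]
  apply Finset.sum_le_sum
  intro i _
  by_cases h0 : i = ⟨0, by omega⟩
  · subst h0; rw [show c ⟨0, by omega⟩ = 0 from hz]; simp
  · have h1 : (⟨1, by omega⟩ : Fin m) ≤ i := by
      rcases i with ⟨iv, hiv⟩
      simp only [Fin.mk_le_mk]
      have : iv ≠ 0 := fun h => h0 (by simp [Fin.ext_iff, h])
      omega
    exact mul_le_mul_of_nonneg_right (hmono h1) (mul_self_nonneg _)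

/-- with `Π = CᵀC`, `L̃ = C L Cᵀ`, `λ_1 = 0`, `Π x_1 = x_1` and `C x_1 = x̃_1`,
if `x_2ᵀ Π L Π x_2 ≤ (1+ε_2) λ_2` and `‖Π x_2‖₂ > 0` then
`λ_2 ≤ λ̃_2 ≤ (1+ε_2) λ_2 / ‖Π x_2‖₂²`.  (Indices are 0-based: `x_1 = x ⟨0⟩`, `x_2 = x ⟨1⟩`.) -/
theorem coarsened_second_eigenvalue_bound {n N : ℕ} (hn2 : 2 ≤ n) (hn : n ≤ N)
    (W : Matrix (Fin N) (Fin N) ℝ) (hW : IsWeightedGraph W)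
    (C : Matrix (Fin n) (Fin N) ℝ) (hC : IsCoarsening C)
    (lam : Fin N → ℝ) (x : Fin N → Fin N → ℝ)
    (hmono : Monotone lam)
    (hortho : ∀ i j, x i ⬝ᵥ x j = if i = j then (1 : ℝ) else 0)
    (heig : ∀ i, lap W *ᵥ x i = lam i • x i)
    (lamt : Fin n → ℝ) (xt : Fin n → Fin n → ℝ)
    (hmonot : Monotone lamt)
    (horthot : ∀ i j, xt i ⬝ᵥ xt j = if i = j then (1 : ℝ) else 0)
    (heigt : ∀ i, (C * lap W * Cᵀ) *ᵥ xt i = lamt i • xt i)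
    (h0 : lam ⟨0, by omega⟩ = 0)
    (hfix : (Cᵀ * C) *ᵥ x ⟨0, by omega⟩ = x ⟨0, by omega⟩)
    (hCx1 : C *ᵥ x ⟨0, by omega⟩ = xt ⟨0, by omega⟩)
    (eps : ℝ) (heps : 0 ≤ eps)
    (hrss : ((Cᵀ * C) *ᵥ x ⟨1, by omega⟩) ⬝ᵥ (lap W *ᵥ ((Cᵀ * C) *ᵥ x ⟨1, by omega⟩))
      ≤ (1 + eps) * lam ⟨1, by omega⟩)
    (hpos : 0 < ((Cᵀ * C) *ᵥ x ⟨1, by omega⟩) ⬝ᵥ ((Cᵀ * C) *ᵥ x ⟨1, by omega⟩)) :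
    lam ⟨1, by omega⟩ ≤ lamt ⟨1, by omega⟩ ∧
    lamt ⟨1, by omega⟩ ≤ (1 + eps) * lam ⟨1, by omega⟩ /
      (((Cᵀ * C) *ᵥ x ⟨1, by omega⟩) ⬝ᵥ ((Cᵀ * C) *ᵥ x ⟨1, by omega⟩)) := by
  have hN2 : 2 ≤ N := le_trans hn2 hn
  have hCCt : C * Cᵀ = 1 := coarsening_CCt C hC
  have key3 : ∀ {p q : ℕ} (A : Matrix (Fin p) (Fin q) ℝ) (a : Fin q → ℝ) (b : Fin p → ℝ),
      (A *ᵥ a) ⬝ᵥ b = a ⬝ᵥ (Aᵀ *ᵥ b) := by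
    intro p q A a b
    rw [Matrix.dotProduct_mulVec, Matrix.vecMul_transpose]
  have key : ∀ (a : Fin n → ℝ) (b : Fin N → ℝ), (Cᵀ *ᵥ a) ⬝ᵥ b = a ⬝ᵥ (C *ᵥ b) := by
    intro a b
    rw [key3, Matrix.transpose_transpose]
  have hne10 : ((⟨1, by omega⟩ : Fin n) = ⟨0, by omega⟩) = False := by
    simp [Fin.ext_iff]
  have hne10N : ((⟨1, by omega⟩ : Fin N) = ⟨0, by omega⟩) = False := by
    simp [Fin.ext_iff]
  -- Lower bound
  set z : Fin N → ℝ := Cᵀ *ᵥ xt ⟨1, by omega⟩ with hzd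
  have hz0 : z ⬝ᵥ x ⟨0, by omega⟩ = 0 := by
    rw [hzd, key, hCx1, horthot]
    simp [hne10]
  have hzz1 : z ⬝ᵥ z = 1 := by
    rw [hzd, key, Matrix.mulVec_mulVec, hCCt, Matrix.one_mulVec, horthot]
    simp
  have hzLz : z ⬝ᵥ (lap W *ᵥ z) = lamt ⟨1, by omega⟩ := by
    rw [hzd, key, Matrix.mulVec_mulVec, Matrix.mulVec_mulVec, heigt, dotProduct_smul,
      horthot]
    simp
  have lower := rayleigh_second hN2 (lap W) lam x hmono hortho heig z hz0
  rw [hzz1, hzLz, mul_one] at lower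
  -- Upper bound
  have hPit : (Cᵀ * C)ᵀ = Cᵀ * C := by
    rw [Matrix.transpose_mul, Matrix.transpose_transpose]
  have hPi2 : (Cᵀ * C) * (Cᵀ * C) = Cᵀ * C := by
    rw [Matrix.mul_assoc, ← Matrix.mul_assoc C Cᵀ C, hCCt, Matrix.one_mul]
  set y : Fin n → ℝ := C *ᵥ x ⟨1, by omega⟩ with hyd
  have hyxt0 : y ⬝ᵥ xt ⟨0, by omega⟩ = 0 := by
    rw [hyd, key3, ← hCx1, Matrix.mulVec_mulVec, hfix, hortho]
    simp [hne10N]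
  have hyy : y ⬝ᵥ y = ((Cᵀ * C) *ᵥ x ⟨1, by omega⟩) ⬝ᵥ ((Cᵀ * C) *ᵥ x ⟨1, by omega⟩) := by
    have hr : ((Cᵀ * C) *ᵥ x ⟨1, by omega⟩) ⬝ᵥ ((Cᵀ * C) *ᵥ x ⟨1, by omega⟩)
        = x ⟨1, by omega⟩ ⬝ᵥ ((Cᵀ * C) *ᵥ x ⟨1, by omega⟩) := by
      rw [key3, hPit, Matrix.mulVec_mulVec, hPi2]
    rw [hyd, key3, Matrix.mulVec_mulVec, hr]
  have hyLy : y ⬝ᵥ ((C * lap W * Cᵀ) *ᵥ y)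
      = ((Cᵀ * C) *ᵥ x ⟨1, by omega⟩) ⬝ᵥ (lap W *ᵥ ((Cᵀ * C) *ᵥ x ⟨1, by omega⟩)) := by
    have hr : ((Cᵀ * C) *ᵥ x ⟨1, by omega⟩) ⬝ᵥ (lap W *ᵥ ((Cᵀ * C) *ᵥ x ⟨1, by omega⟩))
        = x ⟨1, by omega⟩ ⬝ᵥ (((Cᵀ * C) * (lap W * (Cᵀ * C))) *ᵥ x ⟨1, by omega⟩) := by
      rw [key3, hPit, Matrix.mulVec_mulVec, Matrix.mulVec_mulVec, Matrix.mul_assoc]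
    have hm : Cᵀ * (C * lap W * Cᵀ) * C = (Cᵀ * C) * (lap W * (Cᵀ * C)) := by
      simp only [Matrix.mul_assoc]
    rw [hyd, key3, Matrix.mulVec_mulVec, Matrix.mulVec_mulVec, hm, hr]
  have hru := rayleigh_second hn2 (C * lap W * Cᵀ) lamt xt hmonot horthot heigt y hyxt0
  rw [hyy, hyLy] at hru
  have hup : lamt ⟨1, by omega⟩ *
      (((Cᵀ * C) *ᵥ x ⟨1, by omega⟩) ⬝ᵥ ((Cᵀ * C) *ᵥ x ⟨1, by omega⟩))
      ≤ (1 + eps) * lam ⟨1, by omega⟩ := le_trans hru hrss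
  exact ⟨lower, (le_div_iff₀ hpos).mpr hup⟩
end

section
/- Let G be a weighted graph on N vertices with combinatorial Laplacian L, E_F a contracted matching of G with associated averaging projection Π_F, and Π_F^⊥ = I_N − Π_F. Then for every vector x ∈ ℝ^N, (Π_F^⊥ x)ᵀ L (Π_F^⊥ x) = (1/4) Σ_{{i,j} ∈ E_F} (x(i) − x(j))² (d_i + d_j + 2 W(i,j)). -/
open Matrix

/-- A contracted matching of the weighted graph given by `W`: a finite set of edges
(each recorded once, as an ordered pair `(i,j)` with `W i j > 0` and `i ≠ j`) such that for any
two distinct edges `{i,j}`, `{p,q}` all of `W i p`, `W i q`, `W j p`, `W j q` vanish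
(in particular the edges are vertex-disjoint, and no vertex of one edge is adjacent to a vertex
of another one). -/
def IsContractedMatching {N : ℕ} (W : Matrix (Fin N) (Fin N) ℝ)
    (EF : Finset (Fin N × Fin N)) : Prop :=
  (∀ e ∈ EF, e.1 ≠ e.2 ∧ 0 < W e.1 e.2) ∧
  (∀ e ∈ EF, ∀ e' ∈ EF, e ≠ e' →
    W e.1 e'.1 = 0 ∧ W e.1 e'.2 = 0 ∧ W e.2 e'.1 = 0 ∧ W e.2 e'.2 = 0)

open scoped Classical in
/-- The averaging projection `Π_F` associated with a (vertex-disjoint) set of edges `E_F`: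
`(Π_F x)(i) = (Π_F x)(j) = (x(i)+x(j))/2` for every `{i,j} ∈ E_F`, and `(Π_F x)(ℓ) = x(ℓ)` for
every vertex `ℓ` not incident to an edge of `E_F`. -/
noncomputable def avgProj {N : ℕ} (EF : Finset (Fin N × Fin N)) :
    Matrix (Fin N) (Fin N) ℝ :=
  Matrix.of fun a b =>
    if a = b then (if ∃ e ∈ EF, a = e.1 ∨ a = e.2 then (1 : ℝ) / 2 else 1)
    else if (a, b) ∈ EF ∨ (b, a) ∈ EF then 1 / 2 else 0

/-!
`y = Π_F^⊥ x` vanishes off the matched vertices and equals `±(x(i) - x(j))/2` on an edge `{i, j}`.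
As the matching is contracted and `W` has zero diagonal, the only vertex adjacent to `i` on which
`y` is nonzero is its partner `j`, so `(L y)(i) = d_i y(i) - W(i,j) y(j)`. Hence `yᵀ L y` splits
into one contribution per edge, each a polynomial identity in `x(i), x(j), d_i, d_j, W(i,j)`.
-/

open Finset

def endpoints {α : Type*} [DecidableEq α] (e : α × α) : Finset α := {e.1, e.2}

@[simp]
lemma mem_endpoints {α : Type*} [DecidableEq α] {e : α × α} {a : α} :
    a ∈ endpoints e ↔ a = e.1 ∨ a = e.2 := by
  simp [endpoints]

lemma sum_eq_sum_edges_of_pairwiseDisjoint {α M : Type*} [Fintype α] [DecidableEq α]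
    [AddCommMonoid M] {E : Finset (α × α)} (hne : ∀ e ∈ E, e.1 ≠ e.2)
    (hdisj : (E : Set (α × α)).PairwiseDisjoint endpoints) {f : α → M}
    (hf : ∀ a ∉ E.biUnion endpoints, f a = 0) :
    ∑ a, f a = ∑ e ∈ E, (f e.1 + f e.2) := by
  rw [← sum_subset (subset_univ _) fun a _ ha => hf a ha, sum_biUnion hdisj]
  exact sum_congr rfl fun e he => sum_pair (hne e he)

lemma IsWeightedGraph.isSymm {N : ℕ} {W : Matrix (Fin N) (Fin N) ℝ} (hW : IsWeightedGraph W) :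
    W.IsSymm :=
  Matrix.IsSymm.ext fun i j => hW.1 j i

namespace IsContractedMatching

variable {N : ℕ} {W : Matrix (Fin N) (Fin N) ℝ} {EF : Finset (Fin N × Fin N)}

lemma eq_of_ne_zero (hEF : IsContractedMatching W EF) {e e' : Fin N × Fin N}
    (he : e ∈ EF) (he' : e' ∈ EF) {a c : Fin N} (ha : a ∈ endpoints e) (hc : c ∈ endpoints e')
    (hac : W a c ≠ 0) : e = e' := by
  by_contra hee
  obtain ⟨h11, h12, h21, h22⟩ := hEF.2 e he e' he' hee
  rw [mem_endpoints] at ha hc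
  rcases ha with rfl | rfl <;> rcases hc with rfl | rfl <;> contradiction

/-- An endpoint shared by two edges would be adjacent to the other endpoint of both. -/
lemma pairwiseDisjoint (hEF : IsContractedMatching W EF) (hW : W.IsSymm) :
    (EF : Set (Fin N × Fin N)).PairwiseDisjoint endpoints := by
  intro e he e' he' hee
  refine disjoint_left.2 fun a ha ha' => hee ?_
  have hpos := (hEF.1 e' he').2
  rcases mem_endpoints.1 ha' with rfl | rfl
  · exact hEF.eq_of_ne_zero he he' ha (c := e'.2) (by simp) hpos.ne'
  · exact hEF.eq_of_ne_zero he he' ha (c := e'.1) (by simp) (by rw [hW.apply]; exact hpos.ne')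

lemma sum_mul_eq_of_mem_endpoints (hEF : IsContractedMatching W EF) {e : Fin N × Fin N}
    (he : e ∈ EF) {a : Fin N} (ha : a ∈ endpoints e) {y : Fin N → ℝ}
    (hy : ∀ c ∉ EF.biUnion endpoints, y c = 0) :
    ∑ c, W a c * y c = W a e.1 * y e.1 + W a e.2 * y e.2 := by
  rw [← sum_pair (f := fun c => W a c * y c) (hEF.1 e he).1]
  refine (sum_subset (subset_univ _) fun c _ hc => ?_).symm
  by_cases hcm : c ∈ EF.biUnion endpoints
  · obtain ⟨e', he', hce'⟩ := mem_biUnion.1 hcm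
    have hac : W a c = 0 := by
      by_contra hac
      exact hc (hEF.eq_of_ne_zero he he' ha hce' hac ▸ hce')
    rw [hac, zero_mul]
  · rw [hy c hcm, mul_zero]

end IsContractedMatching

section avgProj

variable {N : ℕ} {EF : Finset (Fin N × Fin N)}

lemma avgProj_apply_of_notMem {a : Fin N} (ha : a ∉ EF.biUnion endpoints) (c : Fin N) :
    avgProj EF a c = (1 : Matrix (Fin N) (Fin N) ℝ) a c := by
  simp only [mem_biUnion, mem_endpoints, not_exists, not_and] at ha
  have hdiag : ¬ ∃ e ∈ EF, a = e.1 ∨ a = e.2 := fun ⟨e, he, hae⟩ => ha e he hae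
  by_cases hac : a = c
  · subst hac
    rw [avgProj, Matrix.of_apply, if_pos rfl, if_neg hdiag, Matrix.one_apply_eq]
  · have hoff : ¬ ((a, c) ∈ EF ∨ (c, a) ∈ EF) := by
      rintro (h | h)
      · exact ha _ h (Or.inl rfl)
      · exact ha _ h (Or.inr rfl)
    simp [avgProj, hac, hoff]

lemma avgProj_apply_of_mem_endpoints
    (hdisj : (EF : Set (Fin N × Fin N)).PairwiseDisjoint endpoints) {e : Fin N × Fin N}
    (he : e ∈ EF) {a : Fin N} (ha : a ∈ endpoints e) (c : Fin N) :
    avgProj EF a c = if c ∈ endpoints e then 1 / 2 else 0 := by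
  by_cases hac : a = c
  · subst hac
    have hdiag : ∃ e ∈ EF, a = e.1 ∨ a = e.2 := ⟨e, he, mem_endpoints.1 ha⟩
    rw [avgProj, Matrix.of_apply, if_pos rfl, if_pos hdiag, if_pos ha]
  · have hedge : (a, c) ∈ EF ∨ (c, a) ∈ EF ↔ c ∈ endpoints e := by
      constructor
      · rintro (h | h) <;> rw [← hdisj.elim_finset h he a (by simp) ha] <;> simp
      · intro hc
        rw [mem_endpoints] at ha hc
        rcases ha with rfl | rfl <;> rcases hc with rfl | rfl
        all_goals first | exact absurd rfl hac | simp [he]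
    simp only [avgProj, Matrix.of_apply, if_neg hac, hedge]

lemma avgProj_mulVec_of_notMem {a : Fin N} (ha : a ∉ EF.biUnion endpoints) (x : Fin N → ℝ) :
    (avgProj EF *ᵥ x) a = x a := by
  conv_rhs => rw [← Matrix.one_mulVec x]
  simp only [Matrix.mulVec, dotProduct, avgProj_apply_of_notMem ha]

lemma avgProj_mulVec_of_mem_endpoints
    (hdisj : (EF : Set (Fin N × Fin N)).PairwiseDisjoint endpoints) {e : Fin N × Fin N}
    (he : e ∈ EF) (hne : e.1 ≠ e.2) {a : Fin N} (ha : a ∈ endpoints e) (x : Fin N → ℝ) :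
    (avgProj EF *ᵥ x) a = (x e.1 + x e.2) / 2 := by
  simp only [Matrix.mulVec, dotProduct, avgProj_apply_of_mem_endpoints hdisj he ha, ite_mul,
    zero_mul, sum_ite_mem, univ_inter]
  rw [endpoints, sum_pair hne]
  ring

end avgProj

lemma lap_mulVec_apply {N : ℕ} (W : Matrix (Fin N) (Fin N) ℝ) (y : Fin N → ℝ) (i : Fin N) :
    (lap W *ᵥ y) i = (∑ j, W i j) * y i - ∑ j, W i j * y j := by
  rw [lap, Matrix.sub_mulVec, Pi.sub_apply, Matrix.mulVec_diagonal]
  rfl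

/-- for a contracted matching `E_F` with averaging projection `Π_F` and
`Π_F^⊥ = I − Π_F`, every `x ∈ ℝ^N` satisfies
`(Π_F^⊥ x)ᵀ L (Π_F^⊥ x) = (1/4) Σ_{{i,j} ∈ E_F} (x(i) − x(j))² (d_i + d_j + 2 W(i,j))`. -/
theorem avgProj_compl_laplacian_quadform {N : ℕ} (W : Matrix (Fin N) (Fin N) ℝ)
    (hW : IsWeightedGraph W) (EF : Finset (Fin N × Fin N))
    (hEF : IsContractedMatching W EF) (x : Fin N → ℝ) :
    ((1 - avgProj EF) *ᵥ x) ⬝ᵥ (lap W *ᵥ ((1 - avgProj EF) *ᵥ x)) =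
      (1 / 4) * ∑ e ∈ EF, (x e.1 - x e.2) ^ 2 *
        ((∑ ℓ, W e.1 ℓ) + (∑ ℓ, W e.2 ℓ) + 2 * W e.1 e.2) := by
  set y := (1 - avgProj EF) *ᵥ x with hy_def
  have hne : ∀ e ∈ EF, e.1 ≠ e.2 := fun e he => (hEF.1 e he).1
  have hdisj := hEF.pairwiseDisjoint hW.isSymm
  have hy_apply : ∀ a, y a = x a - (avgProj EF *ᵥ x) a := fun a => by
    rw [hy_def, Matrix.sub_mulVec, Matrix.one_mulVec, Pi.sub_apply]
  have hy_zero : ∀ a ∉ EF.biUnion endpoints, y a = 0 := fun a ha => by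
    rw [hy_apply, avgProj_mulVec_of_notMem ha, sub_self]
  have hy_edge : ∀ e ∈ EF, ∀ a ∈ endpoints e, y a = x a - (x e.1 + x e.2) / 2 :=
    fun e he a ha => by rw [hy_apply, avgProj_mulVec_of_mem_endpoints hdisj he (hne e he) ha]
  rw [dotProduct, sum_eq_sum_edges_of_pairwiseDisjoint hne hdisj
    fun a ha => by rw [hy_zero a ha, zero_mul], mul_sum]
  refine sum_congr rfl fun e he => ?_
  have h₁ : e.1 ∈ endpoints e := by simp
  have h₂ : e.2 ∈ endpoints e := by simp
  simp only [lap_mulVec_apply, hEF.sum_mul_eq_of_mem_endpoints he h₁ hy_zero,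
    hEF.sum_mul_eq_of_mem_endpoints he h₂ hy_zero, hy_edge e he _ h₁, hy_edge e he _ h₂, hW.2.2,
    hW.1 e.2 e.1]
  ring
end

section
/- Let G be a weighted graph on N vertices with combinatorial Laplacian L, E_F a contracted matching of G with associated averaging projection Π_F, and let x ∈ ℝ^N be a unit eigenvector of L with eigenvalue λ (L x = λ x, ‖x‖₂ = 1). Then xᵀ Π_F L Π_F x − λ = (1/4) Σ_{{i,j} ∈ E_F} (x(i) − x(j))² (d_i + d_j + 2 W(i,j) − 4λ). -/
/-!
Write `b_e = 𝟙_j - 𝟙_i` for an edge `e = (i, j)`. Averaging over the disjoint edges of `E_F` gives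
`Π_F x = x + y` with `y = ∑_e ((x i - x j) / 2) b_e`. As `L` is symmetric and `L x = λ x`,
`(x + y)ᵀ L (x + y) = λ + 2 λ xᵀ y + yᵀ L y`, where `xᵀ y = -½ ∑_e (x i - x j)²`. In `yᵀ L y` the
cross terms `b_eᵀ L b_e'` (`e ≠ e'`) only involve weights between the two edges, which vanish for a
contracted matching, and `b_eᵀ L b_e = d_i + d_j + 2 W(i,j)`.
-/

open Matrix

namespace Matrix

variable {n R : Type*} [Fintype n] [CommRing R]

theorem sum_smul_dotProduct_mulVec_sum_smul {ι : Type*} (s : Finset ι) (c : ι → R)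
    (v : ι → n → R) (A : Matrix n n R)
    (h : ∀ i ∈ s, ∀ j ∈ s, i ≠ j → v i ⬝ᵥ (A *ᵥ v j) = 0) :
    (∑ i ∈ s, c i • v i) ⬝ᵥ (A *ᵥ ∑ i ∈ s, c i • v i) =
      ∑ i ∈ s, c i ^ 2 * (v i ⬝ᵥ (A *ᵥ v i)) := by
  simp only [mulVec_sum, mulVec_smul, sum_dotProduct, dotProduct_sum, smul_dotProduct,
    dotProduct_smul, smul_eq_mul]
  refine Finset.sum_congr rfl fun i hi => ?_
  rw [Finset.sum_eq_single_of_mem i hi fun j hj hji => by rw [h j hj i hi hji, mul_zero]]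
  ring

theorem add_dotProduct_mulVec_add_of_mulVec_eq_smul {A : Matrix n n R} (hA : A.IsSymm)
    {x : n → R} {μ : R} (hx : A *ᵥ x = μ • x) (y : n → R) :
    (x + y) ⬝ᵥ (A *ᵥ (x + y)) = μ * (x ⬝ᵥ x) + 2 * μ * (x ⬝ᵥ y) + y ⬝ᵥ (A *ᵥ y) := by
  have hxy : x ⬝ᵥ (A *ᵥ y) = μ * (x ⬝ᵥ y) := by
    rw [dotProduct_mulVec, ← mulVec_transpose, hA.eq, hx, smul_dotProduct, smul_eq_mul]
  simp only [mulVec_add, add_dotProduct, dotProduct_add, hxy, hx, dotProduct_smul, smul_eq_mul,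
    dotProduct_comm y x]
  ring

end Matrix

section

variable {n R : Type*} [DecidableEq n] [CommRing R]

def edgeVec (e : n × n) : n → R := Pi.single e.2 1 - Pi.single e.1 1

theorem edgeVec_apply_of_not_incident {e : n × n} {a : n} (h : ¬(a = e.1 ∨ a = e.2)) :
    edgeVec e a = (0 : R) := by
  simp_all [edgeVec]

theorem edgeVec_apply_fst {e : n × n} (h : e.1 ≠ e.2) : edgeVec e e.1 = (-1 : R) := by
  simp [edgeVec, h]

theorem edgeVec_apply_snd {e : n × n} (h : e.1 ≠ e.2) : edgeVec e e.2 = (1 : R) := by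
  simp [edgeVec, h.symm]

variable [Fintype n]

theorem edgeVec_dotProduct (e : n × n) (x : n → R) : edgeVec e ⬝ᵥ x = x e.2 - x e.1 := by
  simp [edgeVec, sub_dotProduct]

theorem edgeVec_dotProduct_mulVec_edgeVec (A : Matrix n n R) (e e' : n × n) :
    edgeVec e ⬝ᵥ (A *ᵥ edgeVec e') = A e.2 e'.2 - A e.2 e'.1 - A e.1 e'.2 + A e.1 e'.1 := by
  simp [edgeVec, mulVec_sub, mulVec_single]
  ring

end

section

variable {N : ℕ} {W : Matrix (Fin N) (Fin N) ℝ}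

theorem lap_isSymm (hW : ∀ i j, W i j = W j i) : (lap W).IsSymm :=
  IsSymm.sub (isSymm_diagonal _) (IsSymm.ext fun i j => hW j i)

theorem lap_apply_of_ne {i j : Fin N} (h : i ≠ j) : lap W i j = -W i j := by
  simp [lap, h]

theorem lap_apply_self (i : Fin N) : lap W i i = (∑ j, W i j) - W i i := by
  simp [lap]

theorem edgeVec_dotProduct_lap_mulVec_edgeVec_self (hsymm : ∀ i j, W i j = W j i)
    (hdiag : ∀ i, W i i = 0) {e : Fin N × Fin N} (h : e.1 ≠ e.2) :
    edgeVec e ⬝ᵥ (lap W *ᵥ edgeVec e) = (∑ ℓ, W e.1 ℓ) + (∑ ℓ, W e.2 ℓ) + 2 * W e.1 e.2 := by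
  rw [edgeVec_dotProduct_mulVec_edgeVec, lap_apply_self, lap_apply_self, lap_apply_of_ne h,
    lap_apply_of_ne h.symm, hdiag, hdiag, hsymm e.2 e.1]
  ring

end

theorem avgProj_mulVec_apply_of_not_incident {N : ℕ} {EF : Finset (Fin N × Fin N)} {a : Fin N}
    (ha : ¬∃ e ∈ EF, a = e.1 ∨ a = e.2) (x : Fin N → ℝ) : (avgProj EF *ᵥ x) a = x a := by
  have hrow : avgProj EF a = Pi.single a 1 := by
    ext b
    by_cases hab : a = b
    · subst hab
      rw [avgProj, of_apply, if_pos rfl, if_neg ha, Pi.single_eq_same]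
    · have hb : ¬((a, b) ∈ EF ∨ (b, a) ∈ EF) := fun h =>
        ha (h.elim (fun h => ⟨_, h, Or.inl rfl⟩) (fun h => ⟨_, h, Or.inr rfl⟩))
      simp [avgProj, hab, hb, Ne.symm hab]
  rw [mulVec, hrow, single_one_dotProduct]

namespace IsContractedMatching

variable {N : ℕ} {W : Matrix (Fin N) (Fin N) ℝ} {EF : Finset (Fin N × Fin N)}

/-- A shared vertex would turn one of the vanishing cross weights into a positive edge weight. -/
theorem eq_of_incident (hEF : IsContractedMatching W EF) {e e' : Fin N × Fin N} (he : e ∈ EF)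
    (he' : e' ∈ EF) {a : Fin N} (ha : a = e.1 ∨ a = e.2) (ha' : a = e'.1 ∨ a = e'.2) :
    e = e' := by
  by_contra hne
  have := hEF.2 e he e' he' hne
  have := hEF.2 e' he' e he (Ne.symm hne)
  have := (hEF.1 e he).2
  have := (hEF.1 e' he').2
  rcases ha with rfl | rfl <;> rcases ha' with h | h <;> simp_all

theorem mem_or_swap_mem_iff (hEF : IsContractedMatching W EF) {e : Fin N × Fin N}
    (he : e ∈ EF) {a b : Fin N} (ha : a = e.1 ∨ a = e.2) (hab : a ≠ b) :
    (a, b) ∈ EF ∨ (b, a) ∈ EF ↔ b = e.1 ∨ b = e.2 := by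
  constructor
  · rintro (h | h)
    · obtain rfl := hEF.eq_of_incident h he (Or.inl rfl) ha
      exact Or.inr rfl
    · obtain rfl := hEF.eq_of_incident h he (Or.inr rfl) ha
      exact Or.inl rfl
  · rintro (rfl | rfl) <;> rcases ha with rfl | rfl
    all_goals first | exact absurd rfl hab | simp [he]

theorem avgProj_apply_of_incident (hEF : IsContractedMatching W EF) {e : Fin N × Fin N}
    (he : e ∈ EF) {a : Fin N} (ha : a = e.1 ∨ a = e.2) (b : Fin N) :
    avgProj EF a b = if b = e.1 ∨ b = e.2 then 1 / 2 else 0 := by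
  by_cases hab : a = b
  · have hinc : ∃ e ∈ EF, a = e.1 ∨ a = e.2 := ⟨e, he, ha⟩
    subst hab
    rw [avgProj, of_apply, if_pos rfl, if_pos hinc, if_pos ha]
  · simp only [avgProj, of_apply, if_neg hab, hEF.mem_or_swap_mem_iff he ha hab]

theorem avgProj_mulVec_apply_of_incident (hEF : IsContractedMatching W EF) {e : Fin N × Fin N}
    (he : e ∈ EF) {a : Fin N} (ha : a = e.1 ∨ a = e.2) (x : Fin N → ℝ) :
    (avgProj EF *ᵥ x) a = (x e.1 + x e.2) / 2 := by
  simp only [mulVec, dotProduct, hEF.avgProj_apply_of_incident he ha, ite_mul, zero_mul,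
    Finset.sum_ite, Finset.sum_const_zero, add_zero, Finset.filter_or, Finset.filter_eq',
    Finset.mem_univ, if_true]
  rw [← Finset.insert_eq, Finset.sum_pair (hEF.1 e he).1]
  ring

theorem avgProj_mulVec (hEF : IsContractedMatching W EF) (x : Fin N → ℝ) :
    avgProj EF *ᵥ x = x + ∑ e ∈ EF, ((x e.1 - x e.2) / 2) • edgeVec e := by
  funext a
  simp only [Pi.add_apply, Finset.sum_apply, Pi.smul_apply, smul_eq_mul]
  by_cases hinc : ∃ e ∈ EF, a = e.1 ∨ a = e.2
  · obtain ⟨e, he, ha⟩ := hinc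
    have hne := (hEF.1 e he).1
    rw [hEF.avgProj_mulVec_apply_of_incident he ha, Finset.sum_eq_single_of_mem e he
      fun e' he' he'e => by
        rw [edgeVec_apply_of_not_incident fun ha' => he'e (hEF.eq_of_incident he' he ha' ha),
          mul_zero]]
    rcases ha with rfl | rfl
    · rw [edgeVec_apply_fst hne]; ring
    · rw [edgeVec_apply_snd hne]; ring
  · rw [avgProj_mulVec_apply_of_not_incident hinc, Finset.sum_eq_zero fun e he => by
      rw [edgeVec_apply_of_not_incident fun ha => hinc ⟨e, he, ha⟩, mul_zero], add_zero]

theorem edgeVec_dotProduct_lap_mulVec_edgeVec_of_ne (hEF : IsContractedMatching W EF)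
    {e e' : Fin N × Fin N} (he : e ∈ EF) (he' : e' ∈ EF) (hne : e ≠ e') :
    edgeVec e ⬝ᵥ (lap W *ᵥ edgeVec e') = 0 := by
  have hlap : ∀ p q, (p = e.1 ∨ p = e.2) → (q = e'.1 ∨ q = e'.2) → W p q = 0 →
      lap W p q = 0 := fun p q hp hq hW => by
    rw [lap_apply_of_ne fun hpq => hne (hEF.eq_of_incident he he' hp (by rwa [hpq])), hW,
      neg_zero]
  obtain ⟨h₁₁, h₁₂, h₂₁, h₂₂⟩ := hEF.2 e he e' he' hne
  rw [edgeVec_dotProduct_mulVec_edgeVec, hlap _ _ (.inl rfl) (.inl rfl) h₁₁,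
    hlap _ _ (.inl rfl) (.inr rfl) h₁₂, hlap _ _ (.inr rfl) (.inl rfl) h₂₁,
    hlap _ _ (.inr rfl) (.inr rfl) h₂₂]
  ring

end IsContractedMatching

/-- for a contracted matching `E_F` with averaging projection `Π_F`, and a unit
eigenvector `x` of `L` with eigenvalue `λ`,
`xᵀ Π_F L Π_F x − λ = (1/4) Σ_{{i,j} ∈ E_F} (x(i) − x(j))² (d_i + d_j + 2 W(i,j) − 4λ)`. -/
theorem avgProj_laplacian_quadform_eigvec {N : ℕ} (W : Matrix (Fin N) (Fin N) ℝ)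
    (hW : IsWeightedGraph W) (EF : Finset (Fin N × Fin N))
    (hEF : IsContractedMatching W EF) (x : Fin N → ℝ) (lam : ℝ)
    (heig : lap W *ᵥ x = lam • x) (hunit : x ⬝ᵥ x = 1) :
    (avgProj EF *ᵥ x) ⬝ᵥ (lap W *ᵥ (avgProj EF *ᵥ x)) - lam =
      (1 / 4) * ∑ e ∈ EF, (x e.1 - x e.2) ^ 2 *
        ((∑ ℓ, W e.1 ℓ) + (∑ ℓ, W e.2 ℓ) + 2 * W e.1 e.2 - 4 * lam) := by
  rw [hEF.avgProj_mulVec x,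
    add_dotProduct_mulVec_add_of_mulVec_eq_smul (lap_isSymm hW.1) heig, hunit,
    sum_smul_dotProduct_mulVec_sum_smul _ _ _ _ fun e he e' he' hne =>
      hEF.edgeVec_dotProduct_lap_mulVec_edgeVec_of_ne he he' hne,
    dotProduct_sum, mul_one, add_assoc, add_sub_cancel_left,
    Finset.mul_sum, Finset.mul_sum, ← Finset.sum_add_distrib]
  refine Finset.sum_congr rfl fun e he => ?_
  rw [dotProduct_smul, dotProduct_comm, edgeVec_dotProduct, smul_eq_mul,
    edgeVec_dotProduct_lap_mulVec_edgeVec_self hW.1 hW.2.2 (hEF.1 e he).1]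
  ring
end
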